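/- arXiv:1401.1062 — 2 statements merged into one kernel-verified Lean document; each statement's English description precedes it below -/
import Mathlib

section
/- Let φ ∈ O_K⟨x⟩, k, n ≥ 1, ψ = φ^{∘k}, and x ∈ O_K with ψ(x) ≡ x (mod πⁿ). With b_n(x) = (ψ(x) − x)/πⁿ, one has b_n(φ(x)) ≡ b_n(x)·φ'(x) (mod πⁿ) (note φ(x) also satisfies ψ(φ(x)) ≡ φ(x) mod πⁿ). -/
/-!
Since `ψ = φ^{∘k}` commutes with `φ`, we have `ψ(φ(x)) - φ(x) = φ(y) - φ(x)` with `y = ψ(x)`.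
Both `x` and `y` lie in `O_K`, and termwise the ultrametric Taylor estimate
`|φ(y) - φ(x) - (y - x) φ'(x)| ≤ |y - x|²` holds. As `|y - x| ≤ |π|ⁿ`, dividing by `πⁿ` leaves
an error of size at most `|π|ⁿ`.
-/

open Filter Topology

/-- Evaluation of a convergent power series on the valuation ring. -/
noncomputable def evalPS {K : Type*} [NormedField K] (a : ℕ → K) (x : K) : K :=
  ∑' i : ℕ, a i * x ^ i

/-- Coefficients of the formal derivative of `∑ aᵢxⁱ`. -/
noncomputable def derivCoeff {K : Type*} [NormedField K] (a : ℕ → K) : ℕ → K :=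
  fun i => ((i + 1 : ℕ) : K) * a (i + 1)

lemma norm_div_le_of_norm_le_sq {K : Type*} [NormedDivisionRing K] {z c : K}
    (h : ‖z‖ ≤ ‖c‖ ^ 2) : ‖z / c‖ ≤ ‖c‖ := by
  rw [norm_div]
  exact div_le_of_le_mul₀ (norm_nonneg c) (norm_nonneg c) (by rwa [← sq])

section Ultrametric

variable {K : Type*} [NormedField K] [IsUltrametricDist K]

lemma norm_pow_succ_sub_pow_succ_sub_mul_le {x y : K} (hx : ‖x‖ ≤ 1) (hy : ‖y‖ ≤ 1) (m : ℕ) :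
    ‖y ^ (m + 1) - x ^ (m + 1) - ((m + 1 : ℕ) : K) * x ^ m * (y - x)‖ ≤ ‖y - x‖ ^ 2 := by
  induction m with
  | zero => simp [sq, mul_self_nonneg]
  | succ m ih =>
    have hsplit : y ^ (m + 2) - x ^ (m + 2) - ((m + 2 : ℕ) : K) * x ^ (m + 1) * (y - x) =
        y * (y ^ (m + 1) - x ^ (m + 1) - ((m + 1 : ℕ) : K) * x ^ m * (y - x)) +
          ((m + 1 : ℕ) : K) * x ^ m * (y - x) ^ 2 := by
      push_cast
      ring
    rw [hsplit]
    refine (IsUltrametricDist.norm_add_le_max _ _).trans (max_le ?_ ?_)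
    · rw [norm_mul]
      simpa using mul_le_mul hy ih (norm_nonneg _) zero_le_one
    · rw [norm_mul, norm_mul, norm_pow, norm_pow]
      have hcoeff : ‖((m + 1 : ℕ) : K)‖ * ‖x‖ ^ m ≤ 1 :=
        mul_le_one₀ (IsUltrametricDist.norm_natCast_le_one K _) (by positivity)
          (pow_le_one₀ (norm_nonneg x) hx)
      simpa using mul_le_mul_of_nonneg_right hcoeff (sq_nonneg ‖y - x‖)

lemma norm_evalPS_le_one {a : ℕ → K} (ha : ∀ i, ‖a i‖ ≤ 1) {x : K} (hx : ‖x‖ ≤ 1) :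
    ‖evalPS a x‖ ≤ 1 := by
  refine IsUltrametricDist.norm_tsum_le_of_forall_le_of_nonneg zero_le_one fun i => ?_
  rw [norm_mul, norm_pow]
  exact mul_le_one₀ (ha i) (by positivity) (pow_le_one₀ (norm_nonneg x) hx)

lemma norm_iterate_evalPS_le_one {a : ℕ → K} (ha : ∀ i, ‖a i‖ ≤ 1) (k : ℕ) {x : K}
    (hx : ‖x‖ ≤ 1) : ‖(evalPS a)^[k] x‖ ≤ 1 := by
  induction k generalizing x with
  | zero => exact hx
  | succ k ih => exact ih (norm_evalPS_le_one ha hx)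

lemma tendsto_derivCoeff_zero {a : ℕ → K} (ha0 : Tendsto a atTop (𝓝 0)) :
    Tendsto (derivCoeff a) atTop (𝓝 0) := by
  rw [tendsto_zero_iff_norm_tendsto_zero]
  have hshift : Tendsto (fun i => ‖a (i + 1)‖) atTop (𝓝 0) := by
    simpa using (ha0.comp (tendsto_add_atTop_nat 1)).norm
  refine squeeze_zero (fun i => norm_nonneg _) (fun i => ?_) hshift
  rw [derivCoeff, norm_mul]
  simpa using mul_le_mul_of_nonneg_right (IsUltrametricDist.norm_natCast_le_one K (i + 1))
    (norm_nonneg (a (i + 1)))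

variable [CompleteSpace K]

lemma summable_mul_pow_of_tendsto_zero {a : ℕ → K} (ha0 : Tendsto a atTop (𝓝 0)) {x : K}
    (hx : ‖x‖ ≤ 1) : Summable (fun i => a i * x ^ i) := by
  apply NonarchimedeanAddGroup.summable_of_tendsto_cofinite_zero
  rw [Nat.cofinite_eq_atTop, tendsto_zero_iff_norm_tendsto_zero]
  refine squeeze_zero (fun i => norm_nonneg _) (fun i => ?_) (by simpa using ha0.norm)
  rw [norm_mul, norm_pow]
  exact mul_le_of_le_one_right (norm_nonneg _) (pow_le_one₀ (norm_nonneg x) hx)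

lemma evalPS_sub_evalPS_sub_mul_evalPS_derivCoeff {a : ℕ → K} (ha0 : Tendsto a atTop (𝓝 0))
    {x y : K} (hx : ‖x‖ ≤ 1) (hy : ‖y‖ ≤ 1) :
    evalPS a y - evalPS a x - (y - x) * evalPS (derivCoeff a) x =
      ∑' i, a (i + 1) * (y ^ (i + 1) - x ^ (i + 1) - ((i + 1 : ℕ) : K) * x ^ i * (y - x)) := by
  have hdiff : Summable (fun i => a i * y ^ i - a i * x ^ i) :=
    (summable_mul_pow_of_tendsto_zero ha0 hy).sub (summable_mul_pow_of_tendsto_zero ha0 hx)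
  have hderiv : Summable (fun i => (y - x) * (derivCoeff a i * x ^ i)) :=
    (summable_mul_pow_of_tendsto_zero (tendsto_derivCoeff_zero ha0) hx).mul_left _
  rw [evalPS, evalPS, evalPS, ← (summable_mul_pow_of_tendsto_zero ha0 hy).tsum_sub
    (summable_mul_pow_of_tendsto_zero ha0 hx), ← tsum_mul_left, hdiff.tsum_eq_zero_add]
  simp only [pow_zero, mul_one, sub_self, zero_add]
  rw [← ((summable_nat_add_iff 1).mpr hdiff).tsum_sub hderiv]
  refine tsum_congr fun i => ?_
  rw [derivCoeff]
  ring

lemma norm_evalPS_sub_evalPS_sub_mul_evalPS_derivCoeff_le {a : ℕ → K} (ha : ∀ i, ‖a i‖ ≤ 1)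
    (ha0 : Tendsto a atTop (𝓝 0)) {x y : K} (hx : ‖x‖ ≤ 1) (hy : ‖y‖ ≤ 1) :
    ‖evalPS a y - evalPS a x - (y - x) * evalPS (derivCoeff a) x‖ ≤ ‖y - x‖ ^ 2 := by
  rw [evalPS_sub_evalPS_sub_mul_evalPS_derivCoeff ha0 hx hy]
  refine IsUltrametricDist.norm_tsum_le_of_forall_le_of_nonneg (by positivity) fun i => ?_
  rw [norm_mul]
  exact (mul_le_of_le_one_left (norm_nonneg _) (ha _)).trans
    (norm_pow_succ_sub_pow_succ_sub_mul_le hx hy i)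

end Ultrametric

theorem statement8_general {K : Type*} [NontriviallyNormedField K] [IsUltrametricDist K]
    [CompleteSpace K]
    (π : K)
    (a : ℕ → K) (ha : ∀ i, ‖a i‖ ≤ 1) (ha0 : Tendsto a atTop (𝓝 0))
    (k n : ℕ)
    (x : K) (hx : ‖x‖ ≤ 1) (hfix : ‖(evalPS a)^[k] x - x‖ ≤ ‖π‖ ^ n) :
    ‖((evalPS a)^[k] (evalPS a x) - evalPS a x) / π ^ n -
        ((evalPS a)^[k] x - x) / π ^ n * evalPS (derivCoeff a) x‖ ≤ ‖π‖ ^ n := by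
  set y := (evalPS a)^[k] x
  have hcomm : (evalPS a)^[k] (evalPS a x) = evalPS a y :=
    Function.Commute.iterate_self (evalPS a) k x
  have hsplit : ((evalPS a)^[k] (evalPS a x) - evalPS a x) / π ^ n -
      (y - x) / π ^ n * evalPS (derivCoeff a) x =
      (evalPS a y - evalPS a x - (y - x) * evalPS (derivCoeff a) x) / π ^ n := by
    rw [hcomm]
    ring
  rw [hsplit, ← norm_pow]
  apply norm_div_le_of_norm_le_sq
  calc _ ≤ ‖y - x‖ ^ 2 := norm_evalPS_sub_evalPS_sub_mul_evalPS_derivCoeff_le ha ha0 hx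
          (norm_iterate_evalPS_le_one ha k hx)
    _ ≤ ‖π ^ n‖ ^ 2 := by rw [norm_pow]; gcongr

/-- let `φ ∈ O_K⟨x⟩`, `k, n ≥ 1`, `ψ = φ^{∘k}` and `x ∈ O_K` with
`ψ(x) ≡ x (mod πⁿ)`.  With `bₙ(y) = (ψ(y) − y)/πⁿ`, one has
`bₙ(φ(x)) ≡ bₙ(x)·φ'(x) (mod πⁿ)`. -/
theorem statement8 {K : Type*} [NontriviallyNormedField K] [IsUltrametricDist K]
    [CompleteSpace K]
    (π : K) (hπ0 : 0 < ‖π‖) (hπ1 : ‖π‖ < 1) (hπmax : ∀ y : K, ‖y‖ < 1 → ‖y‖ ≤ ‖π‖)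
    (a : ℕ → K) (ha : ∀ i, ‖a i‖ ≤ 1) (ha0 : Tendsto a atTop (𝓝 0))
    (k n : ℕ) (hk : 1 ≤ k) (hn : 1 ≤ n)
    (x : K) (hx : ‖x‖ ≤ 1) (hfix : ‖(evalPS a)^[k] x - x‖ ≤ ‖π‖ ^ n) :
    ‖((evalPS a)^[k] (evalPS a x) - evalPS a x) / π ^ n -
        ((evalPS a)^[k] x - x) / π ^ n * evalPS (derivCoeff a) x‖ ≤ ‖π‖ ^ n :=
  statement8_general π a ha ha0 k n x hx hfix
end

section
/- Let φ ∈ O_K⟨x⟩, k, n, r ≥ 1. Let ψ = φ^{∘k} and suppose x ∈ O_K satisfies ψ(x) ≡ x (mod πⁿ). Define a_n(x) = ψ'(x), b_n(x) = (ψ(x)−x)/πⁿ, a_{n+1}(x) = (ψ^{∘r})'(x), and b_{n+1} via ψ^{∘r}(x) ≡ x (mod πⁿ). Then: (i) (ψ^{∘r})'(x) ≡ a_n(x)^r (mod πⁿ); (ii) ψ^{∘r}(x) − x ≡ πⁿ b_n(x)(1 + a_n(x) + ⋯ + a_n(x)^{r−1}) (mod π^{2n}). -/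
/-!
On the unit ball, an element `φ ∈ O_K⟨x⟩` satisfies `‖φ(x)‖ ≤ 1` and
`‖φ(y) - φ(x) - φ'(x)(y - x)‖ ≤ ‖y - x‖²`: this holds for each monomial, hence for `φ` by the
ultrametric inequality. Both estimates survive composition, so they hold for `ψ` and its iterates,
and they force `‖ψ'‖ ≤ 1` and `‖ψ'(y) - ψ'(x)‖ ≤ ‖y - x‖`. Hence every `ψ^{∘j}(x)` lies within
`‖π‖ⁿ` of `x`; the chain rule gives (i), and expanding `ψ` at `x` gives
`ψ^{∘(j+1)}(x) - x ≡ (ψ(x) - x) + ψ'(x) (ψ^{∘j}(x) - x) (mod π^{2n})`, whence (ii) by induction.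
-/

open Filter Topology

open IsUltrametricDist

section

variable {K : Type*} [NormedField K]

lemma norm_pow_le_one_of_norm_le_one {x : K} (hx : ‖x‖ ≤ 1) (m : ℕ) : ‖x ^ m‖ ≤ 1 := by
  rw [norm_pow]
  exact pow_le_one₀ (norm_nonneg x) hx

variable [IsUltrametricDist K]

lemma norm_sub_le_one_of_norm_le_one {x y : K} (hx : ‖x‖ ≤ 1) (hy : ‖y‖ ≤ 1) :
    ‖y - x‖ ≤ 1 := by
  rw [sub_eq_add_neg]
  exact (norm_add_le_max _ _).trans (max_le hy (by rwa [norm_neg]))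

lemma norm_pow_sub_pow_sub_mul_le {x y : K} (hx : ‖x‖ ≤ 1) (hy : ‖y‖ ≤ 1) (m : ℕ) :
    ‖y ^ m - x ^ m - m * x ^ (m - 1) * (y - x)‖ ≤ ‖y - x‖ ^ 2 := by
  cases m with
  | zero => simp
  | succ m =>
    rw [Nat.add_sub_cancel]
    induction m with
    | zero => simp
    | succ m ih =>
      have h : y ^ (m + 2) - x ^ (m + 2) - ((m + 2 : ℕ) : K) * x ^ (m + 1) * (y - x)
          = y * (y ^ (m + 1) - x ^ (m + 1) - ((m + 1 : ℕ) : K) * x ^ m * (y - x))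
            + ((m + 1 : ℕ) : K) * x ^ m * (y - x) ^ 2 := by
        push_cast; ring
      rw [h]
      refine (norm_add_le_max _ _).trans (max_le ?_ ?_)
      · rw [norm_mul]
        exact (mul_le_of_le_one_left (norm_nonneg _) hy).trans ih
      · rw [norm_mul, norm_pow (y - x), norm_mul]
        exact mul_le_of_le_one_left (by positivity) <|
          mul_le_one₀ (norm_natCast_le_one K _) (norm_nonneg _)
            (norm_pow_le_one_of_norm_le_one hx m)

lemma norm_prod_sub_prod_le {ι : Type*} {s : Finset ι} {u v : ι → K} {ε : ℝ} (hε : 0 ≤ ε)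
    (hu : ∀ i ∈ s, ‖u i‖ ≤ 1) (hv : ∀ i ∈ s, ‖v i‖ ≤ 1) (huv : ∀ i ∈ s, ‖u i - v i‖ ≤ ε) :
    ‖∏ i ∈ s, u i - ∏ i ∈ s, v i‖ ≤ ε := by
  classical
  induction s using Finset.induction_on with
  | empty => simpa using hε
  | insert i s hi ih =>
    simp only [Finset.forall_mem_insert] at hu hv huv
    rw [Finset.prod_insert hi, Finset.prod_insert hi]
    have h : u i * ∏ j ∈ s, u j - v i * ∏ j ∈ s, v j
        = (u i - v i) * ∏ j ∈ s, u j + v i * (∏ j ∈ s, u j - ∏ j ∈ s, v j) := by ring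
    have hprod : ‖∏ j ∈ s, u j‖ ≤ 1 := by
      rw [norm_prod]
      exact Finset.prod_le_one (fun j _ => norm_nonneg _) hu.2
    rw [h]
    refine (norm_add_le_max _ _).trans (max_le ?_ ?_) <;> rw [norm_mul]
    · exact (mul_le_of_le_one_right (norm_nonneg _) hprod).trans huv.1
    · exact (mul_le_of_le_one_left (norm_nonneg _) hv.1).trans (ih hu.2 hv.2 huv.2)

end

/-- The estimates satisfied on `O_K` by an element `f` of `O_K⟨x⟩` and its derivative `f'`. -/
structure IsTaylorOnUnitBall {K : Type*} [NormedField K] (f f' : K → K) : Prop where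
  norm_le_one : ∀ x : K, ‖x‖ ≤ 1 → ‖f x‖ ≤ 1
  norm_sub_sub_le : ∀ x y : K, ‖x‖ ≤ 1 → ‖y‖ ≤ 1 → ‖f y - f x - f' x * (y - x)‖ ≤ ‖y - x‖ ^ 2

namespace IsTaylorOnUnitBall

section

variable {K : Type*} [NormedField K]

lemma id : IsTaylorOnUnitBall (id : K → K) (fun _ => 1) where
  norm_le_one _ hx := hx
  norm_sub_sub_le _ _ _ _ := by simp

variable [IsUltrametricDist K] {f f' g g' : K → K}

lemma norm_deriv_le_one (hf : IsTaylorOnUnitBall f f') {x : K} (hx : ‖x‖ ≤ 1) : ‖f' x‖ ≤ 1 := by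
  -- expand at `x` with the step `1`, which stays in the unit ball
  have hx1 : ‖x + 1‖ ≤ 1 := (norm_add_le_max _ _).trans (max_le hx norm_one.le)
  have h : f' x = (f (x + 1) - f x) + -(f (x + 1) - f x - f' x * (x + 1 - x)) := by ring
  rw [h]
  refine (norm_add_le_max _ _).trans (max_le ?_ ?_)
  · exact norm_sub_le_one_of_norm_le_one (hf.norm_le_one x hx) (hf.norm_le_one _ hx1)
  · rw [norm_neg]
    simpa using hf.norm_sub_sub_le x (x + 1) hx hx1

lemma norm_sub_le (hf : IsTaylorOnUnitBall f f') {x y : K} (hx : ‖x‖ ≤ 1) (hy : ‖y‖ ≤ 1) :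
    ‖f y - f x‖ ≤ ‖y - x‖ := by
  have h : f y - f x = (f y - f x - f' x * (y - x)) + f' x * (y - x) := by ring
  rw [h]
  refine (norm_add_le_max _ _).trans (max_le ?_ ?_)
  · refine (hf.norm_sub_sub_le x y hx hy).trans ?_
    rw [sq]
    exact mul_le_of_le_one_left (norm_nonneg _) (norm_sub_le_one_of_norm_le_one hx hy)
  · rw [norm_mul]
    exact mul_le_of_le_one_left (norm_nonneg _) (hf.norm_deriv_le_one hx)

lemma norm_deriv_sub_le (hf : IsTaylorOnUnitBall f f') {x y : K} (hx : ‖x‖ ≤ 1)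
    (hy : ‖y‖ ≤ 1) : ‖f' y - f' x‖ ≤ ‖y - x‖ := by
  rcases eq_or_ne y x with rfl | hyx
  · simp
  -- the expansions at `x` and at `y` add up to `(f' y - f' x) * (y - x)`
  have h : (f' y - f' x) * (y - x)
      = (f y - f x - f' x * (y - x)) + (f x - f y - f' y * (x - y)) := by ring
  have hle : ‖f' y - f' x‖ * ‖y - x‖ ≤ ‖y - x‖ * ‖y - x‖ := by
    rw [← norm_mul, h, ← sq]
    refine (norm_add_le_max _ _).trans (max_le (hf.norm_sub_sub_le x y hx hy) ?_)
    simpa only [norm_sub_rev x y] using hf.norm_sub_sub_le y x hy hx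
  exact le_of_mul_le_mul_right hle (norm_pos_iff.mpr (sub_ne_zero.mpr hyx))

lemma comp (hf : IsTaylorOnUnitBall f f') (hg : IsTaylorOnUnitBall g g') :
    IsTaylorOnUnitBall (f ∘ g) (fun x => f' (g x) * g' x) where
  norm_le_one x hx := hf.norm_le_one _ (hg.norm_le_one x hx)
  norm_sub_sub_le x y hx hy := by
    have hgx := hg.norm_le_one x hx
    have hgy := hg.norm_le_one y hy
    have h : f (g y) - f (g x) - f' (g x) * g' x * (y - x)
        = (f (g y) - f (g x) - f' (g x) * (g y - g x))
          + f' (g x) * (g y - g x - g' x * (y - x)) := by ring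
    simp only [Function.comp_apply]
    rw [h]
    refine (norm_add_le_max _ _).trans (max_le ?_ ?_)
    · exact (hf.norm_sub_sub_le _ _ hgx hgy).trans
        (pow_le_pow_left₀ (norm_nonneg _) (hg.norm_sub_le hx hy) 2)
    · rw [norm_mul]
      exact (mul_le_of_le_one_left (norm_nonneg _) (hf.norm_deriv_le_one hgx)).trans
        (hg.norm_sub_sub_le x y hx hy)

lemma iterate (hf : IsTaylorOnUnitBall f f') (m : ℕ) :
    IsTaylorOnUnitBall (f^[m]) (fun x => ∏ j ∈ Finset.range m, f' (f^[j] x)) := by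
  induction m with
  | zero => simpa using IsTaylorOnUnitBall.id
  | succ m ih =>
    rw [Function.iterate_succ']
    simp_rw [Finset.prod_range_succ, mul_comm _ (f' _)]
    exact hf.comp ih

variable {x : K} {ε : ℝ}

lemma norm_iterate_sub_le (hf : IsTaylorOnUnitBall f f') (hx : ‖x‖ ≤ 1) (hd : ‖f x - x‖ ≤ ε)
    (j : ℕ) : ‖f^[j] x - x‖ ≤ ε := by
  induction j with
  | zero => simpa using (norm_nonneg _).trans hd
  | succ j ih =>
    rw [Function.iterate_succ_apply', ← sub_add_sub_cancel _ (f x)]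
    exact (norm_add_le_max _ _).trans
      (max_le ((hf.norm_sub_le hx ((hf.iterate j).norm_le_one x hx)).trans ih) hd)

lemma norm_prod_deriv_iterate_sub_pow_le (hf : IsTaylorOnUnitBall f f') (hx : ‖x‖ ≤ 1)
    (hd : ‖f x - x‖ ≤ ε) (r : ℕ) :
    ‖∏ j ∈ Finset.range r, f' (f^[j] x) - f' x ^ r‖ ≤ ε := by
  have hj j := (hf.iterate j).norm_le_one x hx
  simpa using norm_prod_sub_prod_le (s := Finset.range r) (v := fun _ => f' x)
    ((norm_nonneg _).trans hd) (fun j _ => hf.norm_deriv_le_one (hj j))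
    (fun _ _ => hf.norm_deriv_le_one hx)
    (fun j _ => (hf.norm_deriv_sub_le hx (hj j)).trans (hf.norm_iterate_sub_le hx hd j))

lemma norm_iterate_sub_sub_mul_geom_sum_le (hf : IsTaylorOnUnitBall f f') (hx : ‖x‖ ≤ 1)
    (hd : ‖f x - x‖ ≤ ε) (r : ℕ) :
    ‖f^[r] x - x - (f x - x) * ∑ i ∈ Finset.range r, f' x ^ i‖ ≤ ε ^ 2 := by
  induction r with
  | zero => simpa using sq_nonneg ε
  | succ r ih =>
    rw [Function.iterate_succ_apply', geom_sum_succ]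
    have h : f (f^[r] x) - x - (f x - x) * (f' x * ∑ i ∈ Finset.range r, f' x ^ i + 1)
        = (f (f^[r] x) - f x - f' x * (f^[r] x - x))
          + f' x * (f^[r] x - x - (f x - x) * ∑ i ∈ Finset.range r, f' x ^ i) := by ring
    rw [h]
    refine (norm_add_le_max _ _).trans (max_le ?_ ?_)
    · exact (hf.norm_sub_sub_le x _ hx ((hf.iterate r).norm_le_one x hx)).trans
        (pow_le_pow_left₀ (norm_nonneg _) (hf.norm_iterate_sub_le hx hd r) 2)
    · rw [norm_mul]
      exact (mul_le_of_le_one_left (norm_nonneg _) (hf.norm_deriv_le_one hx)).trans ih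

end

variable {K : Type*} [NontriviallyNormedField K] [IsUltrametricDist K] {f f' : K → K}

lemma hasDerivAt (hf : IsTaylorOnUnitBall f f') {x : K} (hx : ‖x‖ ≤ 1) :
    HasDerivAt f (f' x) x := by
  rw [hasDerivAt_iff_isLittleO, Asymptotics.isLittleO_iff]
  intro c hc
  filter_upwards [Metric.ball_mem_nhds x (lt_min hc one_pos)] with y hy
  rw [Metric.mem_ball, dist_eq_norm, lt_min_iff] at hy
  have hy1 : ‖y‖ ≤ 1 := by
    rw [← sub_add_cancel y x]
    exact (norm_add_le_max _ _).trans (max_le hy.2.le hx)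
  rw [smul_eq_mul, mul_comm]
  refine (hf.norm_sub_sub_le x y hx hy1).trans ?_
  rw [sq]
  exact mul_le_mul_of_nonneg_right hy.1.le (norm_nonneg _)

end IsTaylorOnUnitBall

noncomputable def derivPS {K : Type*} [NormedField K] (a : ℕ → K) (x : K) : K :=
  ∑' i : ℕ, (i : K) * a i * x ^ (i - 1)

section PowerSeries

variable {K : Type*} [NormedField K] [IsUltrametricDist K] [CompleteSpace K]
  {a : ℕ → K}

lemma summable_of_norm_le_of_tendsto_zero (ha0 : Tendsto a atTop (𝓝 0)) {b : ℕ → K}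
    (hb : ∀ i, ‖b i‖ ≤ ‖a i‖) : Summable b :=
  NonarchimedeanAddGroup.summable_of_tendsto_cofinite_zero <| by
    rw [Nat.cofinite_eq_atTop]
    exact squeeze_zero_norm hb (tendsto_zero_iff_norm_tendsto_zero.mp ha0)

variable (ha : ∀ i, ‖a i‖ ≤ 1) (ha0 : Tendsto a atTop (𝓝 0))
include ha0

lemma summable_mul_pow {x : K} (hx : ‖x‖ ≤ 1) : Summable (fun i => a i * x ^ i) :=
  summable_of_norm_le_of_tendsto_zero ha0 fun i => by
    rw [norm_mul]
    exact mul_le_of_le_one_right (norm_nonneg _) (norm_pow_le_one_of_norm_le_one hx i)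

lemma summable_derivPS_mul {x y : K} (hx : ‖x‖ ≤ 1) (hy : ‖y‖ ≤ 1) :
    Summable (fun i : ℕ => (i : K) * a i * x ^ (i - 1) * (y - x)) :=
  summable_of_norm_le_of_tendsto_zero ha0 fun i => by
    rw [norm_mul, norm_mul, norm_mul, mul_comm ‖(i : K)‖]
    exact (mul_le_of_le_one_right (by positivity) (norm_sub_le_one_of_norm_le_one hx hy)).trans
      <| (mul_le_of_le_one_right (by positivity) (norm_pow_le_one_of_norm_le_one hx _)).trans
      <| mul_le_of_le_one_right (norm_nonneg _) (norm_natCast_le_one K i)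

include ha

lemma isTaylorOnUnitBall_evalPS : IsTaylorOnUnitBall (evalPS a) (derivPS a) where
  norm_le_one x hx :=
    norm_tsum_le_of_forall_le_of_nonneg zero_le_one fun i => by
      rw [norm_mul]
      exact mul_le_one₀ (ha i) (norm_nonneg _) (norm_pow_le_one_of_norm_le_one hx i)
  norm_sub_sub_le x y hx hy := by
    have hsum : HasSum (fun i => a i * (y ^ i - x ^ i - i * x ^ (i - 1) * (y - x)))
        (evalPS a y - evalPS a x - derivPS a x * (y - x)) := by
      have hterm : (fun i => a i * (y ^ i - x ^ i - i * x ^ (i - 1) * (y - x)))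
          = fun i => a i * y ^ i - a i * x ^ i - i * a i * x ^ (i - 1) * (y - x) := by
        ext i; ring
      rw [hterm, evalPS, evalPS, derivPS, ← tsum_mul_right]
      exact ((summable_mul_pow ha0 hy).hasSum.sub (summable_mul_pow ha0 hx).hasSum).sub
        (summable_derivPS_mul ha0 hx hy).hasSum
    rw [← hsum.tsum_eq]
    refine norm_tsum_le_of_forall_le_of_nonneg (sq_nonneg _) fun i => ?_
    rw [norm_mul]
    exact (mul_le_of_le_one_left (norm_nonneg _) (ha i)).trans
      (norm_pow_sub_pow_sub_mul_le hx hy i)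

end PowerSeries

theorem statement10_general {K : Type*} [NontriviallyNormedField K] [IsUltrametricDist K]
    [CompleteSpace K]
    (π : K) (hπ0 : 0 < ‖π‖)
    (a : ℕ → K) (ha : ∀ i, ‖a i‖ ≤ 1) (ha0 : Tendsto a atTop (𝓝 0))
    (k n r : ℕ)
    (x : K) (hx : ‖x‖ ≤ 1) (hfix : ‖(evalPS a)^[k] x - x‖ ≤ ‖π‖ ^ n) :
    ‖deriv (((evalPS a)^[k])^[r]) x - (deriv ((evalPS a)^[k]) x) ^ r‖ ≤ ‖π‖ ^ n ∧
    ‖((evalPS a)^[k])^[r] x - x -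
        π ^ n * (((evalPS a)^[k] x - x) / π ^ n) *
          (∑ i ∈ Finset.range r, (deriv ((evalPS a)^[k]) x) ^ i)‖ ≤ ‖π‖ ^ (2 * n) := by
  have hψ := (isTaylorOnUnitBall_evalPS ha ha0).iterate k
  rw [(hψ.hasDerivAt hx).deriv, ((hψ.iterate r).hasDerivAt hx).deriv,
    mul_div_cancel₀ _ (pow_ne_zero n (norm_pos_iff.mp hπ0)), pow_mul']
  exact ⟨hψ.norm_prod_deriv_iterate_sub_pow_le hx hfix r,
    hψ.norm_iterate_sub_sub_mul_geom_sum_le hx hfix r⟩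

/-- let `φ ∈ O_K⟨x⟩`, `k, n, r ≥ 1`, `ψ = φ^{∘k}` and `x ∈ O_K` with
`ψ(x) ≡ x (mod πⁿ)`.  With `aₙ(x) = ψ'(x)` and `bₙ(x) = (ψ(x)−x)/πⁿ`:
(i) `(ψ^{∘r})'(x) ≡ aₙ(x)^r (mod πⁿ)`;
(ii) `ψ^{∘r}(x) − x ≡ πⁿ bₙ(x)(1 + aₙ(x) + ⋯ + aₙ(x)^{r−1}) (mod π^{2n})`. -/
theorem statement10 {K : Type*} [NontriviallyNormedField K] [IsUltrametricDist K]
    [CompleteSpace K]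
    (π : K) (hπ0 : 0 < ‖π‖) (hπ1 : ‖π‖ < 1) (hπmax : ∀ y : K, ‖y‖ < 1 → ‖y‖ ≤ ‖π‖)
    (a : ℕ → K) (ha : ∀ i, ‖a i‖ ≤ 1) (ha0 : Tendsto a atTop (𝓝 0))
    (k n r : ℕ) (hk : 1 ≤ k) (hn : 1 ≤ n) (hr : 1 ≤ r)
    (x : K) (hx : ‖x‖ ≤ 1) (hfix : ‖(evalPS a)^[k] x - x‖ ≤ ‖π‖ ^ n) :
    ‖deriv (((evalPS a)^[k])^[r]) x - (deriv ((evalPS a)^[k]) x) ^ r‖ ≤ ‖π‖ ^ n ∧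
    ‖((evalPS a)^[k])^[r] x - x -
        π ^ n * (((evalPS a)^[k] x - x) / π ^ n) *
          (∑ i ∈ Finset.range r, (deriv ((evalPS a)^[k]) x) ^ i)‖ ≤ ‖π‖ ^ (2 * n) :=
  statement10_general π hπ0 a ha ha0 k n r x hx hfix
end
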